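/- Let T > 0, let λ : ℝ → ℝ be continuously differentiable and strictly positive on [0,T], and let λ_θ : ℝ → ℝ be twice continuously differentiable and strictly positive on [0,T]. Set g(t) = λ'(t)/λ(t) and g_θ(t) = λ_θ'(t)/λ_θ(t). For each N ≥ 1, let S_N = {t ∈ ℝ^N : 0 ≤ t_1 ≤ ⋯ ≤ t_N ≤ T}, let p_N(t) = (∏_{n=1}^N λ(t_n))·exp(−∫_0^T λ(s) ds), and for each n ∈ {1,…,N} let h_{N,n} : ℝ^N → ℝ be continuously differentiable and satisfy, for every t ∈ S_N, h_{N,n}(t) = 0 whenever t_n = t_{n−1} and whenever t_n = t_{n+1}, with the conventions t_0 = 0 and t_{N+1} = T. Assume each of the following series over N ≥ 1 converges absolutely: ∑_N ∫_{S_N} p_N(t)·∑_n (g(t_n) − g_θ(t_n))²·h_{N,n}(t) dt, ∑_N ∫_{S_N} p_N(t)·∑_n ((1/2)·g_θ(t_n)²·h_{N,n}(t) + g_θ'(t_n)·h_{N,n}(t) + g_θ(t_n)·(∂h_{N,n}/∂t_n)(t)) dt, and ∑_N ∫_{S_N} p_N(t)·∑_n g(t_n)²·h_{N,n}(t) dt.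 Then (1/2)·∑_{N≥1} ∫_{S_N} p_N(t)·∑_n (g(t_n) − g_θ(t_n))²·h_{N,n}(t) dt = ∑_{N≥1} ∫_{S_N} p_N(t)·∑_n ((1/2)·g_θ(t_n)²·h_{N,n}(t) + g_θ'(t_n)·h_{N,n}(t) + g_θ(t_n)·(∂h_{N,n}/∂t_n)(t)) dt + (1/2)·∑_{N≥1} ∫_{S_N} p_N(t)·∑_n g(t_n)²·h_{N,n}(t) dt. -/

import Mathlib

/-!
For a fixed number `N = M + 1` of events the identity holds already for the integrals over
`S_N`. Expanding the square, the difference of the two sides is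
`∑ₙ ∫ p · (g gθ h + gθ' h + gθ ∂ₙh)`, and since `∂ₙ p = g(tₙ) p` each integrand is
`∂ₙ (p · gθ(tₙ) · h)`. Integrating first in `tₙ` (Fubini), the slice of `S_N` is the interval
`[t_{n-1}, t_{n+1}]` (with `t_0 = 0`, `t_{N+1} = T`), at both ends of which `h` vanishes, so each
of these integrals is zero by the fundamental theorem of calculus.
-/

open MeasureTheory Real Set

def ordSimplex (N : ℕ) (T : ℝ) : Set (Fin N → ℝ) :=
  {t | Monotone t ∧ ∀ i, t i ∈ Set.Icc 0 T}

noncomputable def poissonDensity (lam : ℝ → ℝ) (T : ℝ) {N : ℕ} (t : Fin N → ℝ) : ℝ :=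
  (∏ n, lam (t n)) * Real.exp (-(∫ s in (0:ℝ)..T, lam s))

lemma Fin.monotone_insertNth_iff {α : Type*} [Preorder α] {n : ℕ} (q : Fin (n + 1)) (x : α)
    (f : Fin n → α) :
    Monotone (q.insertNth x f) ↔
      Monotone f ∧ (∀ i, i.castSucc < q → f i ≤ x) ∧ (∀ i, q ≤ i.castSucc → x ≤ f i) := by
  refine ⟨fun h ↦ ⟨fun a b hab ↦ ?_, fun i hlt ↦ ?_, fun i hle ↦ ?_⟩, ?_⟩
  · simpa using h ((strictMono_succAbove q).monotone hab)
  · have : q.succAbove i ≤ q := by rw [succAbove_of_castSucc_lt q i hlt]; exact hlt.le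
    simpa using h this
  · have : q ≤ q.succAbove i := by
      rw [succAbove_of_le_castSucc q i hle]; exact hle.trans (castSucc_lt_succ (i := i)).le
    simpa using h this
  · rintro ⟨h, hlt, hgt⟩ a b hab
    cases a using succAboveCases q <;> cases b using succAboveCases q
    · simp
    · rename_i j
      have : q ≤ j.castSucc :=
        (lt_succAbove_iff_le_castSucc q j).1 (hab.lt_of_ne (succAbove_ne q j).symm)
      simpa using hgt _ this
    · rename_i j
      have : j.castSucc < q :=
        (succAbove_lt_iff_castSucc_lt q j).1 (hab.lt_of_ne (succAbove_ne q j))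
      simpa using hlt _ this
    · simpa using h <| (strictMono_succAbove _).le_iff_le.mp hab

section Simplex

lemma isCompact_ordSimplex (N : ℕ) (T : ℝ) : IsCompact (ordSimplex N T) := by
  refine (isCompact_univ_pi fun _ ↦ isCompact_Icc).of_isClosed_subset ?_ fun t ht i _ ↦ ht.2 i
  have : ordSimplex N T = (⋂ (i) (j) (_ : i ≤ j), {t : Fin N → ℝ | t i ≤ t j}) ∩
      ⋂ i, (fun t ↦ t i) ⁻¹' Icc 0 T := by
    ext t; simp [ordSimplex, Monotone]
  rw [this]
  exact .inter (isClosed_iInter fun i ↦ isClosed_iInter fun j ↦ isClosed_iInter fun _ ↦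
      isClosed_le (continuous_apply i) (continuous_apply j))
    (isClosed_iInter fun i ↦ isClosed_Icc.preimage (continuous_apply i))

lemma measurableSet_ordSimplex (N : ℕ) (T : ℝ) : MeasurableSet (ordSimplex N T) :=
  (isCompact_ordSimplex N T).isClosed.measurableSet

variable {M : ℕ} {T : ℝ}

lemma ContinuousOn.comp_apply_ordSimplex {N : ℕ} {φ : ℝ → ℝ} (hφ : ContinuousOn φ (Icc 0 T))
    (n : Fin N) : ContinuousOn (fun t : Fin N → ℝ ↦ φ (t n)) (ordSimplex N T) :=
  hφ.comp (continuous_apply n).continuousOn fun _ ht ↦ ht.2 n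

/-- `lowerNeighbour n s` and `upperNeighbour T n s` are the coordinates `t_{n-1}` and `t_{n+1}` next
to the `n`-th one of `t = n.insertNth y s`, with the conventions `t_{-1} = 0` and `t_{M+1} = T`
(coordinates indexed from `0`). -/
def lowerNeighbour (n : Fin (M + 1)) (s : Fin M → ℝ) : ℝ := (Fin.cons 0 s : Fin (M + 1) → ℝ) n

def upperNeighbour (T : ℝ) (n : Fin (M + 1)) (s : Fin M → ℝ) : ℝ :=
  (Fin.snoc s T : Fin (M + 1) → ℝ) n

@[simp]
lemma lowerNeighbour_zero (s : Fin M → ℝ) : lowerNeighbour 0 s = 0 := Fin.cons_zero _ _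

@[simp]
lemma lowerNeighbour_succ (j : Fin M) (s : Fin M → ℝ) : lowerNeighbour j.succ s = s j :=
  Fin.cons_succ _ _ _

@[simp]
lemma upperNeighbour_last (s : Fin M → ℝ) : upperNeighbour T (Fin.last M) s = T := Fin.snoc_last _ _

@[simp]
lemma upperNeighbour_castSucc (j : Fin M) (s : Fin M → ℝ) : upperNeighbour T j.castSucc s = s j :=
  Fin.snoc_castSucc _ _ _

lemma lowerNeighbour_le_iff {s : Fin M → ℝ} (hs : s ∈ ordSimplex M T) (n : Fin (M + 1))
    (y : ℝ) : lowerNeighbour n s ≤ y ↔ 0 ≤ y ∧ ∀ i, i.castSucc < n → s i ≤ y := by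
  cases n using Fin.cases with
  | zero => simp
  | succ j =>
    simp only [lowerNeighbour_succ, Fin.castSucc_lt_succ_iff]
    exact ⟨fun h ↦ ⟨(hs.2 j).1.trans h, fun i hi ↦ (hs.1 hi).trans h⟩, fun h ↦ h.2 j le_rfl⟩

lemma le_upperNeighbour_iff {s : Fin M → ℝ} (hs : s ∈ ordSimplex M T) (n : Fin (M + 1))
    (y : ℝ) : y ≤ upperNeighbour T n s ↔ y ≤ T ∧ ∀ i, n ≤ i.castSucc → y ≤ s i := by
  cases n using Fin.lastCases with
  | last => simp [(Fin.castSucc_lt_last _).not_ge]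
  | cast j =>
    simp only [upperNeighbour_castSucc, Fin.castSucc_le_castSucc_iff]
    exact ⟨fun h ↦ ⟨h.trans (hs.2 j).2, fun i hi ↦ h.trans (hs.1 hi)⟩, fun h ↦ h.2 j le_rfl⟩

lemma insertNth_mem_ordSimplex_iff (n : Fin (M + 1)) (y : ℝ) (s : Fin M → ℝ) :
    n.insertNth y s ∈ ordSimplex (M + 1) T ↔
      s ∈ ordSimplex M T ∧ y ∈ Icc (lowerNeighbour n s) (upperNeighbour T n s) := by
  simp only [ordSimplex, mem_ofPred_eq, Fin.monotone_insertNth_iff, Fin.forall_iff_succAbove n,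
    Fin.insertNth_apply_same, Fin.insertNth_apply_succAbove]
  constructor
  · rintro ⟨⟨hmono, hlt, hgt⟩, ⟨hy0, hyT⟩, hrange⟩
    have hs : s ∈ ordSimplex M T := ⟨hmono, hrange⟩
    exact ⟨hs, (lowerNeighbour_le_iff hs n y).2 ⟨hy0, hlt⟩,
      (le_upperNeighbour_iff hs n y).2 ⟨hyT, hgt⟩⟩
  · rintro ⟨hs, hlow, hup⟩
    obtain ⟨hy0, hlt⟩ := (lowerNeighbour_le_iff hs n y).1 hlow
    obtain ⟨hyT, hgt⟩ := (le_upperNeighbour_iff hs n y).1 hup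
    exact ⟨⟨hs.1, hlt, hgt⟩, ⟨hy0, hyT⟩, hs.2⟩

lemma lowerNeighbour_le_upperNeighbour (hT : 0 ≤ T) {s : Fin M → ℝ} (hs : s ∈ ordSimplex M T)
    (n : Fin (M + 1)) : lowerNeighbour n s ≤ upperNeighbour T n s := by
  refine (lowerNeighbour_le_iff hs n _).2 ⟨?_, fun i hi ↦ ?_⟩
  · exact (le_upperNeighbour_iff hs n 0).2 ⟨hT, fun i _ ↦ (hs.2 i).1⟩
  · exact (le_upperNeighbour_iff hs n _).2
      ⟨(hs.2 i).2, fun k hk ↦ hs.1 (Fin.castSucc_le_castSucc_iff.1 (hi.le.trans hk))⟩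

theorem setIntegral_ordSimplex_succ (hT : 0 ≤ T) (n : Fin (M + 1))
    {f : (Fin (M + 1) → ℝ) → ℝ} (hf : IntegrableOn f (ordSimplex (M + 1) T)) :
    ∫ t in ordSimplex (M + 1) T, f t = ∫ s in ordSimplex M T,
      ∫ y in lowerNeighbour n s..upperNeighbour T n s, f (n.insertNth y s) := by
  have he := volume_preserving_piFinSuccAbove (fun _ : Fin (M + 1) ↦ ℝ) n
  have hf' := (he.symm.integrable_comp_emb (MeasurableEquiv.measurableEmbedding _)).2
    (hf.integrable_indicator (measurableSet_ordSimplex _ _))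
  rw [← integral_indicator (measurableSet_ordSimplex _ _),
    ← integral_indicator (measurableSet_ordSimplex _ _),
    ← he.symm.integral_comp (MeasurableEquiv.measurableEmbedding _)]
  rw [Measure.volume_eq_prod] at hf' ⊢
  refine (integral_prod_symm _ hf').trans ?_
  congr 1 with s
  change ∫ y, (ordSimplex (M + 1) T).indicator f (n.insertNth y s) = _
  by_cases hs : s ∈ ordSimplex M T
  · rw [indicator_of_mem hs,
      intervalIntegral.integral_of_le (lowerNeighbour_le_upperNeighbour hT hs n),
      ← integral_Icc_eq_integral_Ioc, ← integral_indicator measurableSet_Icc]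
    congr 1 with y
    simp only [Set.indicator, insertNth_mem_ordSimplex_iff, hs, true_and]
  · rw [indicator_of_notMem hs]
    simp only [Set.indicator, insertNth_mem_ordSimplex_iff, hs, false_and, if_false,
      integral_zero]

theorem setIntegral_ordSimplex_eq_zero_of_hasDerivAt (hT : 0 ≤ T) (n : Fin (M + 1))
    {F f : (Fin (M + 1) → ℝ) → ℝ} (hf : ContinuousOn f (ordSimplex (M + 1) T))
    (hF : ∀ t ∈ ordSimplex (M + 1) T,
      HasDerivAt (fun y ↦ F (Function.update t n y)) (f t) (t n))
    (hlow : ∀ s ∈ ordSimplex M T, F (n.insertNth (lowerNeighbour n s) s) = 0)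
    (hup : ∀ s ∈ ordSimplex M T, F (n.insertNth (upperNeighbour T n s) s) = 0) :
    ∫ t in ordSimplex (M + 1) T, f t = 0 := by
  rw [setIntegral_ordSimplex_succ hT n (hf.integrableOn_compact (isCompact_ordSimplex _ _))]
  refine setIntegral_eq_zero_of_forall_eq_zero fun s hs ↦ ?_
  have hmem : ∀ y ∈ uIcc (lowerNeighbour n s) (upperNeighbour T n s),
      n.insertNth y s ∈ ordSimplex (M + 1) T := fun y hy ↦
    (insertNth_mem_ordSimplex_iff n y s).2
      ⟨hs, by rwa [uIcc_of_le (lowerNeighbour_le_upperNeighbour hT hs n)] at hy⟩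
  have hderiv : ∀ y ∈ uIcc (lowerNeighbour n s) (upperNeighbour T n s),
      HasDerivAt (fun z ↦ F (n.insertNth z s)) (f (n.insertNth y s)) y := fun y hy ↦ by
    simpa [Fin.update_insertNth] using hF _ (hmem y hy)
  rw [intervalIntegral.integral_eq_sub_of_hasDerivAt hderiv
    (hf.comp (continuous_id.finInsertNth n continuous_const).continuousOn hmem).intervalIntegrable,
    hlow s hs, hup s hs, sub_zero]

lemma apply_insertNth_lowerNeighbour_eq_zero (hT : 0 ≤ T) {φ : (Fin (M + 1) → ℝ) → ℝ}
    (n : Fin (M + 1))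
    (hzero : ∀ t ∈ ordSimplex (M + 1) T, (n : ℕ) = 0 → t n = 0 → φ t = 0)
    (hprev : ∀ t ∈ ordSimplex (M + 1) T, ∀ m : Fin (M + 1),
      (m : ℕ) + 1 = (n : ℕ) → t n = t m → φ t = 0)
    {s : Fin M → ℝ} (hs : s ∈ ordSimplex M T) :
    φ (n.insertNth (lowerNeighbour n s) s) = 0 := by
  have ht := (insertNth_mem_ordSimplex_iff n _ s).2
    ⟨hs, le_rfl, lowerNeighbour_le_upperNeighbour hT hs n⟩
  cases n using Fin.cases with
  | zero => exact hzero _ ht rfl (by simp)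
  | succ j =>
    refine hprev _ ht j.castSucc (by simp) ?_
    rw [← Fin.succAbove_succ_self, Fin.insertNth_apply_succAbove]
    simp

lemma apply_insertNth_upperNeighbour_eq_zero (hT : 0 ≤ T) {φ : (Fin (M + 1) → ℝ) → ℝ}
    (n : Fin (M + 1))
    (hnext : ∀ t ∈ ordSimplex (M + 1) T, ∀ m : Fin (M + 1),
      (n : ℕ) + 1 = (m : ℕ) → t n = t m → φ t = 0)
    (hlast : ∀ t ∈ ordSimplex (M + 1) T, (n : ℕ) = M → t n = T → φ t = 0)
    {s : Fin M → ℝ} (hs : s ∈ ordSimplex M T) :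
    φ (n.insertNth (upperNeighbour T n s) s) = 0 := by
  have ht := (insertNth_mem_ordSimplex_iff n _ s).2
    ⟨hs, lowerNeighbour_le_upperNeighbour hT hs n, le_rfl⟩
  cases n using Fin.lastCases with
  | last => exact hlast _ ht rfl (by simp)
  | cast j =>
    refine hnext _ ht j.succ (by simp) ?_
    rw [← Fin.succAbove_castSucc_self, Fin.insertNth_apply_succAbove]
    simp

end Simplex

section Poisson

variable {T : ℝ} {lam lam' lamθ lamθ' lamθ'' : ℝ → ℝ}

lemma continuousOn_poissonDensity {N : ℕ} (hlam : ContinuousOn lam (Icc 0 T)) :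
    ContinuousOn (poissonDensity lam T (N := N)) (ordSimplex N T) :=
  (continuousOn_finsetProd _ fun i _ ↦ hlam.comp_apply_ordSimplex i).mul continuousOn_const

lemma hasDerivAt_poissonDensity_update {N : ℕ} (t : Fin N → ℝ) (n : Fin N)
    (hlam : HasDerivAt lam (lam' (t n)) (t n)) (hlam0 : lam (t n) ≠ 0) :
    HasDerivAt (fun y ↦ poissonDensity lam T (Function.update t n y))
      (lam' (t n) / lam (t n) * poissonDensity lam T t) (t n) := by
  have hsplit : ∀ y, poissonDensity lam T (Function.update t n y) =
      lam y * ((∏ i ∈ Finset.univ.erase n, lam (t i)) * exp (-∫ s in (0 : ℝ)..T, lam s)) := by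
    intro y
    rw [poissonDensity, ← Finset.mul_prod_erase _ _ (Finset.mem_univ n), mul_assoc]
    congr 2
    · simp
    · exact Finset.prod_congr rfl fun i hi ↦ by
        rw [Function.update_of_ne (Finset.ne_of_mem_erase hi)]
  simp only [hsplit]
  refine (hlam.mul_const _).congr_deriv ?_
  rw [← Function.update_eq_self n t, hsplit, Function.update_eq_self]
  field_simp

/-- `∂/∂tₙ (p(t) · gθ(tₙ) · φ(t))`, expanded by the product rule. -/
noncomputable def scoreDivergence (lam lam' lamθ lamθ' lamθ'' : ℝ → ℝ) (T : ℝ) {N : ℕ}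
    (φ : (Fin N → ℝ) → ℝ) (n : Fin N) (t : Fin N → ℝ) : ℝ :=
  poissonDensity lam T t *
    (lam' (t n) / lam (t n) * (lamθ' (t n) / lamθ (t n)) * φ t
      + (lamθ'' (t n) / lamθ (t n) - (lamθ' (t n) / lamθ (t n)) ^ 2) * φ t
      + lamθ' (t n) / lamθ (t n) * fderiv ℝ φ t (Pi.single n 1))

lemma hasDerivAt_update_poissonDensity_mul_score_mul {N : ℕ} {φ : (Fin N → ℝ) → ℝ}
    (t : Fin N → ℝ) (n : Fin N)
    (hlam : HasDerivAt lam (lam' (t n)) (t n)) (hlam0 : lam (t n) ≠ 0)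
    (hlamθ : HasDerivAt lamθ (lamθ' (t n)) (t n))
    (hlamθ' : HasDerivAt lamθ' (lamθ'' (t n)) (t n)) (hlamθ0 : lamθ (t n) ≠ 0)
    (hφ : DifferentiableAt ℝ φ t) :
    HasDerivAt
      (fun y ↦ poissonDensity lam T (Function.update t n y) * (lamθ' y / lamθ y) *
        φ (Function.update t n y))
      (scoreDivergence lam lam' lamθ lamθ' lamθ'' T φ n t) (t n) := by
  have hφ' :
      HasDerivAt (fun y ↦ φ (Function.update t n y)) (fderiv ℝ φ t (Pi.single n 1)) (t n) :=
    hφ.hasFDerivAt.comp_hasDerivAt_of_eq (t n) (hasDerivAt_update t n (t n))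
      (Function.update_eq_self n t).symm
  refine (((hasDerivAt_poissonDensity_update t n hlam hlam0).mul
    (hlamθ'.div hlamθ hlamθ0)).mul hφ').congr_deriv ?_
  simp only [scoreDivergence, Pi.mul_apply, Pi.div_apply, Function.update_eq_self]
  field_simp

lemma continuousOn_scoreDivergence {N : ℕ} {φ : (Fin N → ℝ) → ℝ}
    (hlam : ContinuousOn lam (Icc 0 T)) (hg : ContinuousOn (fun x ↦ lam' x / lam x) (Icc 0 T))
    (hq : ContinuousOn (fun x ↦ lamθ' x / lamθ x) (Icc 0 T))
    (hr : ContinuousOn (fun x ↦ lamθ'' x / lamθ x) (Icc 0 T)) (hφ : ContDiff ℝ 1 φ) (n : Fin N) :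
    ContinuousOn (scoreDivergence lam lam' lamθ lamθ' lamθ'' T φ n) (ordSimplex N T) := by
  have hq' := hq.comp_apply_ordSimplex n
  have hφc := hφ.continuous.continuousOn (s := ordSimplex N T)
  have hdφ : ContinuousOn (fun t ↦ fderiv ℝ φ t (Pi.single n 1)) (ordSimplex N T) :=
    ((hφ.continuous_fderiv one_ne_zero).clm_apply continuous_const).continuousOn
  exact (continuousOn_poissonDensity hlam).mul
    ((((hg.comp_apply_ordSimplex n).mul hq').mul hφc).add
      (((hr.comp_apply_ordSimplex n).sub (hq'.pow 2)).mul hφc) |>.add (hq'.mul hdφ))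

theorem setIntegral_scoreDivergence_eq_zero {M : ℕ} (hT : 0 ≤ T)
    (hlam : ∀ t ∈ Icc 0 T, HasDerivAt lam (lam' t) t) (hlampos : ∀ t ∈ Icc 0 T, 0 < lam t)
    (hlamθ : ∀ t ∈ Icc 0 T, HasDerivAt lamθ (lamθ' t) t)
    (hlamθ' : ∀ t ∈ Icc 0 T, HasDerivAt lamθ' (lamθ'' t) t)
    (hlamθpos : ∀ t ∈ Icc 0 T, 0 < lamθ t)
    (hg : ContinuousOn (fun x ↦ lam' x / lam x) (Icc 0 T))
    (hq : ContinuousOn (fun x ↦ lamθ' x / lamθ x) (Icc 0 T))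
    (hr : ContinuousOn (fun x ↦ lamθ'' x / lamθ x) (Icc 0 T))
    {φ : (Fin (M + 1) → ℝ) → ℝ} (hφ : ContDiff ℝ 1 φ) (n : Fin (M + 1))
    (hzero : ∀ t ∈ ordSimplex (M + 1) T, (n : ℕ) = 0 → t n = 0 → φ t = 0)
    (hprev : ∀ t ∈ ordSimplex (M + 1) T, ∀ m : Fin (M + 1),
      (m : ℕ) + 1 = (n : ℕ) → t n = t m → φ t = 0)
    (hnext : ∀ t ∈ ordSimplex (M + 1) T, ∀ m : Fin (M + 1),
      (n : ℕ) + 1 = (m : ℕ) → t n = t m → φ t = 0)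
    (hlast : ∀ t ∈ ordSimplex (M + 1) T, (n : ℕ) = M → t n = T → φ t = 0) :
    ∫ t in ordSimplex (M + 1) T, scoreDivergence lam lam' lamθ lamθ' lamθ'' T φ n t = 0 := by
  have hlamc : ContinuousOn lam (Icc 0 T) :=
    continuousOn_of_forall_continuousAt fun x hx ↦ (hlam x hx).continuousAt
  refine setIntegral_ordSimplex_eq_zero_of_hasDerivAt hT n
    (F := fun t ↦ poissonDensity lam T t * (lamθ' (t n) / lamθ (t n)) * φ t)
    (continuousOn_scoreDivergence hlamc hg hq hr hφ n) (fun t ht ↦ ?_)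
    (fun s hs ↦ mul_eq_zero_of_right _ (apply_insertNth_lowerNeighbour_eq_zero hT n hzero hprev hs))
    (fun s hs ↦ mul_eq_zero_of_right _ (apply_insertNth_upperNeighbour_eq_zero hT n hnext hlast hs))
  have htn := ht.2 n
  simpa using hasDerivAt_update_poissonDensity_mul_score_mul t n (hlam _ htn) (hlampos _ htn).ne'
    (hlamθ _ htn) (hlamθ' _ htn) (hlamθpos _ htn).ne' (hφ.differentiable one_ne_zero t)

theorem half_setIntegral_sq_score_sub_eq {M : ℕ} (hT : 0 ≤ T)
    (hlam : ∀ t ∈ Icc 0 T, HasDerivAt lam (lam' t) t) (hlam'c : ContinuousOn lam' (Icc 0 T))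
    (hlampos : ∀ t ∈ Icc 0 T, 0 < lam t)
    (hlamθ : ∀ t ∈ Icc 0 T, HasDerivAt lamθ (lamθ' t) t)
    (hlamθ' : ∀ t ∈ Icc 0 T, HasDerivAt lamθ' (lamθ'' t) t)
    (hlamθ''c : ContinuousOn lamθ'' (Icc 0 T)) (hlamθpos : ∀ t ∈ Icc 0 T, 0 < lamθ t)
    (h : Fin (M + 1) → (Fin (M + 1) → ℝ) → ℝ) (hh : ∀ n, ContDiff ℝ 1 (h n))
    (hzero : ∀ t ∈ ordSimplex (M + 1) T, ∀ n : Fin (M + 1), (n : ℕ) = 0 → t n = 0 → h n t = 0)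
    (hprev : ∀ t ∈ ordSimplex (M + 1) T, ∀ n m : Fin (M + 1),
      (m : ℕ) + 1 = (n : ℕ) → t n = t m → h n t = 0)
    (hnext : ∀ t ∈ ordSimplex (M + 1) T, ∀ n m : Fin (M + 1),
      (n : ℕ) + 1 = (m : ℕ) → t n = t m → h n t = 0)
    (hlast : ∀ t ∈ ordSimplex (M + 1) T, ∀ n : Fin (M + 1), (n : ℕ) = M → t n = T → h n t = 0) :
    (1/2) * (∫ t in ordSimplex (M + 1) T, poissonDensity lam T t * ∑ n : Fin (M + 1),
        (lam' (t n) / lam (t n) - lamθ' (t n) / lamθ (t n))^2 * h n t)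
      = (∫ t in ordSimplex (M + 1) T, poissonDensity lam T t * ∑ n : Fin (M + 1),
          ((1/2) * (lamθ' (t n) / lamθ (t n))^2 * h n t
            + (lamθ'' (t n) / lamθ (t n) - (lamθ' (t n) / lamθ (t n))^2) * h n t
            + (lamθ' (t n) / lamθ (t n)) * fderiv ℝ (h n) t (Pi.single n 1)))
        + (1/2) * (∫ t in ordSimplex (M + 1) T, poissonDensity lam T t * ∑ n : Fin (M + 1),
          (lam' (t n) / lam (t n))^2 * h n t) := by
  have hlamc : ContinuousOn lam (Icc 0 T) :=
    continuousOn_of_forall_continuousAt fun x hx ↦ (hlam x hx).continuousAt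
  have hlamθc : ContinuousOn lamθ (Icc 0 T) :=
    continuousOn_of_forall_continuousAt fun x hx ↦ (hlamθ x hx).continuousAt
  have hlamθ'c : ContinuousOn lamθ' (Icc 0 T) :=
    continuousOn_of_forall_continuousAt fun x hx ↦ (hlamθ' x hx).continuousAt
  have hg := hlam'c.div hlamc fun x hx ↦ (hlampos x hx).ne'
  have hq := hlamθ'c.div hlamθc fun x hx ↦ (hlamθpos x hx).ne'
  have hr := hlamθ''c.div hlamθc fun x hx ↦ (hlamθpos x hx).ne'
  have hint : ∀ {f : (Fin (M + 1) → ℝ) → ℝ}, ContinuousOn f (ordSimplex (M + 1) T) →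
      IntegrableOn f (ordSimplex (M + 1) T) :=
    fun hf ↦ hf.integrableOn_compact (isCompact_ordSimplex _ _)
  have hdiv : ∫ t in ordSimplex (M + 1) T,
      ∑ n, scoreDivergence lam lam' lamθ lamθ' lamθ'' T (h n) n t = 0 := by
    rw [integral_finsetSum _ fun n _ ↦ hint (continuousOn_scoreDivergence hlamc hg hq hr (hh n) n)]
    exact Finset.sum_eq_zero fun n _ ↦ setIntegral_scoreDivergence_eq_zero hT hlam hlampos hlamθ
      hlamθ' hlamθpos hg hq hr (hh n) n (hzero · · n) (hprev · · n) (hnext · · n) (hlast · · n)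
  have hp := continuousOn_poissonDensity (N := M + 1) hlamc
  have hgS (n : Fin (M + 1)) :
      ContinuousOn (fun t ↦ lam' (t n) / lam (t n)) (ordSimplex (M + 1) T) :=
    hg.comp_apply_ordSimplex n
  have hqS (n : Fin (M + 1)) :
      ContinuousOn (fun t ↦ lamθ' (t n) / lamθ (t n)) (ordSimplex (M + 1) T) :=
    hq.comp_apply_ordSimplex n
  have hrS (n : Fin (M + 1)) :
      ContinuousOn (fun t ↦ lamθ'' (t n) / lamθ (t n)) (ordSimplex (M + 1) T) :=
    hr.comp_apply_ordSimplex n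
  have hhc n := (hh n).continuous
  have hdh n : Continuous fun t ↦ fderiv ℝ (h n) t (Pi.single n 1) :=
    ((hh n).continuous_fderiv one_ne_zero).clm_apply continuous_const
  have hc {u : Fin (M + 1) → (Fin (M + 1) → ℝ) → ℝ}
      (hu : ∀ n, ContinuousOn (u n) (ordSimplex (M + 1) T)) :
      IntegrableOn (fun t ↦ poissonDensity lam T t * ∑ n, u n t) (ordSimplex (M + 1) T) :=
    hint (hp.mul (continuousOn_finsetSum _ fun n _ ↦ hu n))
  rw [← integral_const_mul, ← integral_const_mul, ← integral_add ?_ ?_, eq_comm, ← sub_eq_zero,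
    ← integral_sub ?_ ?_, ← hdiv]
  · congr 1 with t
    simp only [scoreDivergence, Finset.mul_sum, ← Finset.sum_add_distrib, ← Finset.sum_sub_distrib]
    exact Finset.sum_congr rfl fun n _ ↦ by ring
  · exact (hc fun n ↦ by fun_prop).add ((hc fun n ↦ by fun_prop).const_mul _)
  · exact (hc fun n ↦ by fun_prop).const_mul _
  · exact hc fun n ↦ by fun_prop
  · exact (hc fun n ↦ by fun_prop).const_mul _

end Poisson

theorem stmt_15_general (T : ℝ) (hT : 0 < T)
    (lam lam' lamθ lamθ' lamθ'' : ℝ → ℝ)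
    (hlam : ∀ t ∈ Set.Icc 0 T, HasDerivAt lam (lam' t) t)
    (hlam'c : ContinuousOn lam' (Set.Icc 0 T))
    (hlampos : ∀ t ∈ Set.Icc 0 T, 0 < lam t)
    (hlamθ : ∀ t ∈ Set.Icc 0 T, HasDerivAt lamθ (lamθ' t) t)
    (hlamθ' : ∀ t ∈ Set.Icc 0 T, HasDerivAt lamθ' (lamθ'' t) t)
    (hlamθ''c : ContinuousOn lamθ'' (Set.Icc 0 T))
    (hlamθpos : ∀ t ∈ Set.Icc 0 T, 0 < lamθ t)
    (h : (M : ℕ) → Fin (M + 1) → (Fin (M + 1) → ℝ) → ℝ)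
    (hhsmooth : ∀ M n, ContDiff ℝ 1 (h M n))
    (hvanish_zero : ∀ M : ℕ, ∀ t ∈ ordSimplex (M + 1) T, ∀ n : Fin (M + 1),
      (n : ℕ) = 0 → t n = 0 → h M n t = 0)
    (hvanish_prev : ∀ M : ℕ, ∀ t ∈ ordSimplex (M + 1) T, ∀ n m : Fin (M + 1),
      (m : ℕ) + 1 = (n : ℕ) → t n = t m → h M n t = 0)
    (hvanish_next : ∀ M : ℕ, ∀ t ∈ ordSimplex (M + 1) T, ∀ n m : Fin (M + 1),
      (n : ℕ) + 1 = (m : ℕ) → t n = t m → h M n t = 0)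
    (hvanish_T : ∀ M : ℕ, ∀ t ∈ ordSimplex (M + 1) T, ∀ n : Fin (M + 1),
      (n : ℕ) = M → t n = T → h M n t = 0)
    (hS2 : Summable fun M : ℕ => ∫ t in ordSimplex (M + 1) T,
      poissonDensity lam T t * ∑ n : Fin (M + 1),
        ((1/2) * (lamθ' (t n) / lamθ (t n))^2 * h M n t
          + (lamθ'' (t n) / lamθ (t n) - (lamθ' (t n) / lamθ (t n))^2) * h M n t
          + (lamθ' (t n) / lamθ (t n)) * fderiv ℝ (h M n) t (Pi.single n 1)))
    (hS3 : Summable fun M : ℕ => ∫ t in ordSimplex (M + 1) T,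
      poissonDensity lam T t * ∑ n : Fin (M + 1),
        (lam' (t n) / lam (t n))^2 * h M n t) :
    (1/2) * ∑' M : ℕ, (∫ t in ordSimplex (M + 1) T,
        poissonDensity lam T t * ∑ n : Fin (M + 1),
          (lam' (t n) / lam (t n) - lamθ' (t n) / lamθ (t n))^2 * h M n t)
    = (∑' M : ℕ, ∫ t in ordSimplex (M + 1) T,
        poissonDensity lam T t * ∑ n : Fin (M + 1),
          ((1/2) * (lamθ' (t n) / lamθ (t n))^2 * h M n t
            + (lamθ'' (t n) / lamθ (t n) - (lamθ' (t n) / lamθ (t n))^2) * h M n t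
            + (lamθ' (t n) / lamθ (t n)) * fderiv ℝ (h M n) t (Pi.single n 1)))
      + (1/2) * (∑' M : ℕ, ∫ t in ordSimplex (M + 1) T,
          poissonDensity lam T t * ∑ n : Fin (M + 1),
            (lam' (t n) / lam (t n))^2 * h M n t) := by
  rw [← tsum_mul_left, ← tsum_mul_left, ← hS2.tsum_add (hS3.mul_left _)]
  exact tsum_congr fun M ↦ half_setIntegral_sq_score_sub_eq hT.le hlam hlam'c hlampos hlamθ hlamθ'
    hlamθ''c hlamθpos (h M) (hhsmooth M) (hvanish_zero M) (hvanish_prev M) (hvanish_next M)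
    (hvanish_T M)

/-- weighted score matching for Poisson processes: with weights `h M n`
vanishing on all boundary facets of the coordinate ranges of the ordered simplex (with
conventions `t 0 = 0`, `t (N+1) = T`), and assuming absolute convergence of the series
over the number of events `N = M + 1 ≥ 1`, the explicit weighted score-matching
objective equals the implicit one plus a constant not depending on the model intensity
`lamθ`, with no boundary terms.  Here the data score is `g = lam'/lam`, the model score
is `gθ = lamθ'/lamθ`, and `gθ' = lamθ''/lamθ - (lamθ'/lamθ)²`. -/
theorem stmt_15 (T : ℝ) (hT : 0 < T)
    (lam lam' lamθ lamθ' lamθ'' : ℝ → ℝ)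
    (hlam : ∀ t ∈ Set.Icc 0 T, HasDerivAt lam (lam' t) t)
    (hlam'c : ContinuousOn lam' (Set.Icc 0 T))
    (hlampos : ∀ t ∈ Set.Icc 0 T, 0 < lam t)
    (hlamθ : ∀ t ∈ Set.Icc 0 T, HasDerivAt lamθ (lamθ' t) t)
    (hlamθ' : ∀ t ∈ Set.Icc 0 T, HasDerivAt lamθ' (lamθ'' t) t)
    (hlamθ''c : ContinuousOn lamθ'' (Set.Icc 0 T))
    (hlamθpos : ∀ t ∈ Set.Icc 0 T, 0 < lamθ t)
    (h : (M : ℕ) → Fin (M + 1) → (Fin (M + 1) → ℝ) → ℝ)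
    (hhsmooth : ∀ M n, ContDiff ℝ 1 (h M n))
    (hvanish_zero : ∀ M : ℕ, ∀ t ∈ ordSimplex (M + 1) T, ∀ n : Fin (M + 1),
      (n : ℕ) = 0 → t n = 0 → h M n t = 0)
    (hvanish_prev : ∀ M : ℕ, ∀ t ∈ ordSimplex (M + 1) T, ∀ n m : Fin (M + 1),
      (m : ℕ) + 1 = (n : ℕ) → t n = t m → h M n t = 0)
    (hvanish_next : ∀ M : ℕ, ∀ t ∈ ordSimplex (M + 1) T, ∀ n m : Fin (M + 1),
      (n : ℕ) + 1 = (m : ℕ) → t n = t m → h M n t = 0)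
    (hvanish_T : ∀ M : ℕ, ∀ t ∈ ordSimplex (M + 1) T, ∀ n : Fin (M + 1),
      (n : ℕ) = M → t n = T → h M n t = 0)
    (hS1 : Summable fun M : ℕ => ∫ t in ordSimplex (M + 1) T,
      poissonDensity lam T t * ∑ n : Fin (M + 1),
        (lam' (t n) / lam (t n) - lamθ' (t n) / lamθ (t n))^2 * h M n t)
    (hS2 : Summable fun M : ℕ => ∫ t in ordSimplex (M + 1) T,
      poissonDensity lam T t * ∑ n : Fin (M + 1),
        ((1/2) * (lamθ' (t n) / lamθ (t n))^2 * h M n t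
          + (lamθ'' (t n) / lamθ (t n) - (lamθ' (t n) / lamθ (t n))^2) * h M n t
          + (lamθ' (t n) / lamθ (t n)) * fderiv ℝ (h M n) t (Pi.single n 1)))
    (hS3 : Summable fun M : ℕ => ∫ t in ordSimplex (M + 1) T,
      poissonDensity lam T t * ∑ n : Fin (M + 1),
        (lam' (t n) / lam (t n))^2 * h M n t) :
    (1/2) * ∑' M : ℕ, (∫ t in ordSimplex (M + 1) T,
        poissonDensity lam T t * ∑ n : Fin (M + 1),
          (lam' (t n) / lam (t n) - lamθ' (t n) / lamθ (t n))^2 * h M n t)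
    = (∑' M : ℕ, ∫ t in ordSimplex (M + 1) T,
        poissonDensity lam T t * ∑ n : Fin (M + 1),
          ((1/2) * (lamθ' (t n) / lamθ (t n))^2 * h M n t
            + (lamθ'' (t n) / lamθ (t n) - (lamθ' (t n) / lamθ (t n))^2) * h M n t
            + (lamθ' (t n) / lamθ (t n)) * fderiv ℝ (h M n) t (Pi.single n 1)))
      + (1/2) * (∑' M : ℕ, ∫ t in ordSimplex (M + 1) T,
          poissonDensity lam T t * ∑ n : Fin (M + 1),
            (lam' (t n) / lam (t n))^2 * h M n t) :=
  stmt_15_general T hT lam lam' lamθ lamθ' lamθ'' hlam hlam'c hlampos hlamθ hlamθ' hlamθ''c hlamθpos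
    h hhsmooth hvanish_zero hvanish_prev hvanish_next hvanish_T hS2 hS3
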